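/- For every complex number t with 0 < r₀ ≤ |t| ≤ 1 and every positive integer n, |t^{-n} - conj(t)^n| ≤ (2n / r₀^n)·|1 - |t||. -/

import Mathlib

/-!
Since `t * conj t = ‖t‖²`, we have `t⁻ⁿ - conj tⁿ = (1 - ‖t‖²ⁿ) / tⁿ`. The numerator is at most
`2n |1 - ‖t‖|` because `1 - x²ⁿ = (1 - x)(1 + x + ⋯ + x²ⁿ⁻¹)` and `‖t‖ ≤ 1`, and the
denominator is at least `r₀ⁿ`.
-/

open ComplexConjugate

theorem abs_one_sub_pow_le {α : Type*} [CommRing α] [LinearOrder α] [IsOrderedRing α] {a : α}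
    (ha : |a| ≤ 1) (m : ℕ) : |1 - a ^ m| ≤ m * |1 - a| := by
  calc |1 - a ^ m| = |1 ^ m - a ^ m| := by rw [one_pow]
    _ ≤ |1 - a| * m * max |1| |a| ^ (m - 1) := abs_pow_sub_pow_le ..
    _ = m * |1 - a| := by rw [abs_one, max_eq_left ha, one_pow, mul_one, mul_comm]

theorem Complex.zpow_neg_sub_conj_pow (t : ℂ) (n : ℕ) :
    t ^ (-(n : ℤ)) - conj t ^ n = (1 - (‖t‖ : ℂ) ^ (2 * n)) / t ^ n := by
  rcases eq_or_ne t 0 with rfl | ht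
  -- at `t = 0` both sides vanish, since `0⁻¹ = 0` and `0 / 0 = 0`
  · rcases n.eq_zero_or_pos with rfl | hn
    · simp
    · simp [zero_pow hn.ne', zero_pow (mul_ne_zero two_ne_zero hn.ne')]
  rw [eq_div_iff (pow_ne_zero n ht), sub_mul, zpow_neg, zpow_natCast,
    inv_mul_cancel₀ (pow_ne_zero n ht), pow_mul, ← Complex.conj_mul', mul_pow, mul_comm]

theorem Complex.norm_zpow_neg_sub_conj_pow (t : ℂ) (n : ℕ) :
    ‖t ^ (-(n : ℤ)) - conj t ^ n‖ = |1 - ‖t‖ ^ (2 * n)| / ‖t‖ ^ n := by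
  rw [zpow_neg_sub_conj_pow, norm_div, norm_pow, ← Complex.ofReal_pow, ← Complex.ofReal_one,
    ← Complex.ofReal_sub, Complex.norm_real, Real.norm_eq_abs]

theorem stmt_1_general (t : ℂ) (r₀ : ℝ) (hr : 0 < r₀) (h0 : r₀ ≤ ‖t‖)
    (h1 : ‖t‖ ≤ 1) (n : ℕ) :
    ‖t ^ (-(n : ℤ)) - (starRingEnd ℂ t) ^ n‖ ≤
      (2 * n / r₀ ^ n) * |1 - ‖t‖| := by
  rw [Complex.norm_zpow_neg_sub_conj_pow]
  calc |1 - ‖t‖ ^ (2 * n)| / ‖t‖ ^ n ≤ (2 * n) * |1 - ‖t‖| / r₀ ^ n := by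
        gcongr
        exact_mod_cast abs_one_sub_pow_le (a := ‖t‖) (by rwa [abs_norm]) (2 * n)
    _ = (2 * n / r₀ ^ n) * |1 - ‖t‖| := by ring

theorem stmt_1 (t : ℂ) (r₀ : ℝ) (hr : 0 < r₀) (h0 : r₀ ≤ ‖t‖)
    (h1 : ‖t‖ ≤ 1) (n : ℕ) (hn : 0 < n) :
    ‖t ^ (-(n : ℤ)) - (starRingEnd ℂ t) ^ n‖ ≤
      (2 * n / r₀ ^ n) * |1 - ‖t‖| :=
  stmt_1_general t r₀ hr h0 h1 n
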